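/- arXiv:math/0505651 — 6 statements merged into one kernel-verified Lean document; each statement's English description precedes it below -/
import Mathlib

section
/- In the symmetric group on 7 letters, the subgroup generated by the 3-cycle c₃ = (0 1 2) (sending 0↦1, 1↦2, 2↦0 and fixing 3,4,5,6) together with the 5-cycle c₅ = (2 3 4 5 6) (sending 2↦3, 3↦4, 4↦5, 5↦6, 6↦2 and fixing 0,1) is exactly the alternating group on 7 letters. (This is the claim of the 'jeu des permutations paires': the rotations of two overlapping circular plates carrying 3 and 5 beads and sharing one bead reach exactly half of all configurations, namely the even permutations.) -/
open Equiv Equiv.Perm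

private def g3 : Equiv.Perm (Fin 7) := c[(0 : Fin 7), 1, 2]
private def g5 : Equiv.Perm (Fin 7) := c[(2 : Fin 7), 3, 4, 5, 6]

private def wp (w : List Bool) : Equiv.Perm (Fin 7) :=
  (w.map (fun b => if b then g5 else g3)).prod

private def words : List (List Bool) :=
  [[false],
   [false, false],
   [false, false, true, false, true, false, false, true, false, true, true, true],
   [false, false, true, false, true, false, false, true, true, true, false],
   [false, false, true, false, true, false, false, true, true, true, false, true],
   [false, false, true, false, true, true, false, false, true, true, false],
   [false, false, true, false, true, true, false, false, true, true, false, true, true],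
   [false, false, true, false, true, true, true, false, false, true, false],
   [false, false, true, false, true, true, true, false, false, true, false, true],
   [false, false, true, false, true, true, true, true],
   [false, false, true, true, false, true, false, false, true, true, false],
   [false, false, true, true, false, true, false, false, true, true, false, true, true],
   [false, false, true, true, false, true, true, false, false, true, false],
   [false, false, true, true, false, true, true, false, false, true, false, true, true],
   [false, false, true, true, false, true, true, false, false, true, true, false, true],
   [false, false, true, true, false, true, true, true],
   [false, false, true, true, true, false, true, false, false, true, false],
   [false, false, true, true, true, false, true, false, false, true, false, true],
   [false, false, true, true, true, false, true, true],
   [false, false, true, true, true, true, false, true],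
   [false, true, false, false, true, false, true, false, false, true, true, true],
   [false, true, false, false, true, false, true, true, false, true, false, false, true],
   [false, true, false, false, true, true, true, true],
   [false, true, false, true, false, true, false, true, true, false, false, true, true],
   [false, true, false, true, false, true, false, true, true, false, true, false, true],
   [false, true, false, true, false, true, false, true, true, false, true, false, true, true],
   [false, true, false, true, false, true, true, false, false, true, true, false, true],
   [false, true, false, true, false, true, true, false, true, false, true, false, true],
   [false, true, false, true, true, false, true, true, false, true, false, true, true],
   [false, true, true, false, false, true, true, true],
   [false, true, true, false, true, false, true, true, false, true, false, true, true],
   [false, true, true, false, true, false, true, true, false, true, true, false, true],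
   [false, true, true, true, false, false, true, true],
   [false, true, true, true, false, true, false, false, true, false, true, false],
   [false, true, true, true, true, false, false, true],
   [true, false, false, true, false, true, false, false, true, true, true, false],
   [true, false, false, true, false, true, true, false, false, true, true, false, true],
   [true, false, false, true, false, true, true, false, true, false, false, true, false],
   [true, false, false, true, false, true, true, true],
   [true, false, false, true, true, false, true, false, false, true, true, false, true],
   [true, false, false, true, true, false, true, true],
   [true, false, false, true, true, true, false, true],
   [true, false, false, true, true, true, true],
   [true, false, false, true, true, true, true, false],
   [true, false, true, false, false, true, true, true],
   [true, false, true, false, true, false, true, true, false, false, true, true, false],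
   [true, false, true, true, false, false, true, true],
   [true, false, true, true, true, false, false, true],
   [true, false, true, true, true, true],
   [true, false, true, true, true, true, false, false],
   [true, true, false, false, true, false, true, true],
   [true, true, false, false, true, true, false, true],
   [true, true, false, false, true, true, true],
   [true, true, false, false, true, true, true, false],
   [true, true, false, true, false, false, true, true],
   [true, true, false, true, false, true, true, false, true, false, true, true, false],
   [true, true, false, true, true, false, false, true],
   [true, true, false, true, true, true],
   [true, true, false, true, true, true, false, false],
   [true, true, true, false, false, true, false, true],
   [true, true, true, false, false, true, true],
   [true, true, true, false, false, true, true, false],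
   [true, true, true, false, true, false, false, true],
   [true, true, true, false, true, false, false, true, false, true, false, false],
   [true, true, true, false, true, true],
   [true, true, true, false, true, true, false, false],
   [true, true, true, true, false, false, true],
   [true, true, true, true, false, false, true, false],
   [true, true, true, true, false, true],
   [true, true, true, true, false, true, false, false]]

private def L : List (Equiv.Perm (Fin 7)) := words.map wp

set_option maxRecDepth 4000 in
private lemma mem_L : ∀ x y z : Fin 7, x ≠ y → y ≠ z → x ≠ z →
    Equiv.swap x y * Equiv.swap y z ∈ L := by decide

private abbrev G : Subgroup (Equiv.Perm (Fin 7)) :=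
  Subgroup.closure ({c[(0 : Fin 7), 1, 2], c[(2 : Fin 7), 3, 4, 5, 6]} : Set (Equiv.Perm (Fin 7)))

private lemma wp_mem (w : List Bool) : wp w ∈ G := by
  apply Subgroup.list_prod_mem
  intro x hx
  obtain ⟨b, -, rfl⟩ := List.mem_map.1 hx
  cases b
  · exact Subgroup.subset_closure (Or.inl rfl)
  · exact Subgroup.subset_closure (Or.inr rfl)

private lemma L_sub : ∀ p ∈ L, p ∈ G := by
  intro p hp
  obtain ⟨w, -, rfl⟩ := List.mem_map.1 hp
  exact wp_mem w

theorem stmt_3 :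
    Subgroup.closure
      ({c[(0 : Fin 7), 1, 2], c[(2 : Fin 7), 3, 4, 5, 6]} : Set (Equiv.Perm (Fin 7))) =
      alternatingGroup (Fin 7) := by
  apply le_antisymm
  · rw [Subgroup.closure_le]
    rintro σ (rfl | rfl)
    · exact mem_alternatingGroup.2 (by decide)
    · exact mem_alternatingGroup.2 (by decide)
  · rw [← closure_three_cycles_eq_alternating, Subgroup.closure_le]
    intro σ hσ
    replace hσ : IsThreeCycle σ := hσ
    obtain ⟨x, hx, -⟩ := hσ.isCycle
    set y := σ x with hy
    set z := σ y with hz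
    have h3 : σ ^ 3 = 1 := by
      rw [← hσ.orderOf]; exact pow_orderOf_eq_one σ
    have hzx : σ z = x := by
      have h := congrArg (fun p => p x) h3
      simpa [pow_succ, Equiv.Perm.mul_apply, ← hy, ← hz] using h
    have hxy : x ≠ y := fun h => hx h.symm
    have hyz : y ≠ z := fun h => hxy (σ.injective (hy.symm.trans (h.trans hz)))
    have hxz : x ≠ z := fun h => hx (hy.trans ((congrArg σ h).trans hzx))
    have hsupp : σ.support = {x, y, z} := by
      symm
      apply Finset.eq_of_subset_of_card_le
      · intro w hw
        simp only [Finset.mem_insert, Finset.mem_singleton] at hw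
        rcases hw with rfl | rfl | rfl
        · exact mem_support.2 (fun h => hx (hy.trans h))
        · exact mem_support.2 (fun h => hyz (hz.trans h).symm)
        · exact mem_support.2 (fun h => hxz (hzx.symm.trans h))
      · rw [hσ.card_support]
        rw [Finset.card_insert_of_notMem (by simp [hxy, hxz]),
          Finset.card_insert_of_notMem (by simp [hyz]), Finset.card_singleton]
    have hσeq : σ = Equiv.swap x y * Equiv.swap y z := by
      apply Equiv.ext
      intro w
      rcases eq_or_ne w x with rfl | h1
      · rw [Equiv.Perm.mul_apply, Equiv.swap_apply_of_ne_of_ne hxy hxz,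
          Equiv.swap_apply_left, ← hy]
      · rcases eq_or_ne w y with rfl | h2
        · rw [Equiv.Perm.mul_apply, Equiv.swap_apply_left, ← hz,
            Equiv.swap_apply_of_ne_of_ne (Ne.symm hxz) (Ne.symm hyz)]
        · rcases eq_or_ne w z with rfl | h3
          · rw [Equiv.Perm.mul_apply, Equiv.swap_apply_right, Equiv.swap_apply_right, hzx]
          · have hw : σ w = w := by
              have : w ∉ σ.support := by
                rw [hsupp]; simp [h1, h2, h3]
              simpa [mem_support] using this
            rw [Equiv.Perm.mul_apply, Equiv.swap_apply_of_ne_of_ne h2 h3,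
              Equiv.swap_apply_of_ne_of_ne h1 h2, hw]
    have hmem : σ ∈ L := by rw [hσeq]; exact mem_L x y z hxy hyz hxz
    exact L_sub σ hmem
end

section
/- In the symmetric group on 7 letters {0, 1, ..., 6}, the subgroup generated by the six 3-cycles r_i = (0 i i+1) for i = 1, ..., 5 together with r_6 = (0 6 1) is exactly the alternating group on 7 letters. (This is the claim of the 'puzzle hexagonal': rotating triples of hexagonal pieces around each of the six vertices of the central hexagon reaches exactly half of all configurations of the 7 pieces.) -/
/-!
Each generator is a 3-cycle, so they generate a subgroup `H` of the alternating group. Since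
`(0 i i+1)` sends the centre `0` to `i`, the group `H` is transitive on the 7 hexagons; a
transitive group of prime degree is primitive, and by Jordan's theorem a primitive permutation
group containing a 3-cycle contains the alternating group.
-/

open Equiv Equiv.Perm MulAction

variable {α : Type*}

theorem Equiv.Perm.closure_le_alternatingGroup_of_forall_isThreeCycle [Fintype α] [DecidableEq α]
    {S : Set (Perm α)} (hS : ∀ g ∈ S, IsThreeCycle g) :
    Subgroup.closure S ≤ alternatingGroup α :=
  (Subgroup.closure_le _).mpr fun g hg => (hS g hg).mem_alternatingGroup

theorem Equiv.Perm.isPretransitive_closure_of_forall_eq_or_exists_apply_eq {S : Set (Perm α)}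
    (a : α) (h : ∀ b, b = a ∨ ∃ g ∈ S, g a = b) : IsPretransitive (Subgroup.closure S) α := by
  refine (isPretransitive_iff_base a).mpr fun b => ?_
  rcases h b with rfl | ⟨g, hg, rfl⟩
  · exact ⟨1, one_smul _ _⟩
  · exact ⟨⟨g, Subgroup.subset_closure hg⟩, rfl⟩

theorem Equiv.Perm.alternatingGroup_le_of_isPretransitive_of_prime_card [Fintype α]
    [DecidableEq α] {G : Subgroup (Perm α)} [IsPretransitive G α] (hp : (Nat.card α).Prime)
    {g : Perm α} (h3g : IsThreeCycle g) (hg : g ∈ G) :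
    alternatingGroup α ≤ G :=
  alternatingGroup_le_of_isPreprimitive_of_isThreeCycle_mem (.of_prime_card hp) h3g hg

theorem stmt_4 :
    Subgroup.closure
      ({c[(0 : Fin 7), 1, 2], c[(0 : Fin 7), 2, 3], c[(0 : Fin 7), 3, 4],
        c[(0 : Fin 7), 4, 5], c[(0 : Fin 7), 5, 6], c[(0 : Fin 7), 6, 1]} :
        Set (Equiv.Perm (Fin 7))) = alternatingGroup (Fin 7) := by
  set S : Set (Perm (Fin 7)) := {c[0, 1, 2], c[0, 2, 3], c[0, 3, 4], c[0, 4, 5], c[0, 5, 6],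
    c[0, 6, 1]} with hS_def
  have hS : ∀ g ∈ S, IsThreeCycle g := by
    simp only [hS_def, Set.mem_insert_iff, Set.mem_singleton_iff, forall_eq_or_imp, forall_eq,
      ← card_support_eq_three_iff]
    decide
  have : IsPretransitive (Subgroup.closure S) (Fin 7) := by
    refine isPretransitive_closure_of_forall_eq_or_exists_apply_eq 0 ?_
    simp only [hS_def, Set.mem_insert_iff, Set.mem_singleton_iff, exists_eq_or_imp, exists_eq_left]
    decide
  have h₀ : c[0, 1, 2] ∈ S := Set.mem_insert _ _
  exact le_antisymm (closure_le_alternatingGroup_of_forall_isThreeCycle hS)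
    (alternatingGroup_le_of_isPretransitive_of_prime_card (by norm_num) (hS _ h₀)
      (Subgroup.subset_closure h₀))
end

section
/- In the symmetric group on 8 letters {0, 1, ..., 7}, the subgroup generated by the 6-cycle c = (0 1 2 3 4 5) (fixing 6 and 7) together with the two transpositions (0 6) and (3 7) is the whole symmetric group; moreover this group has exactly 40320 elements. (This is the claim of the 'puzzle triangulaire': the rotation of the central hexagon of six triangles together with the two mirror reflections exchanging each outer triangle with its adjacent inner triangle permute the eight triangles arbitrarily, giving the symmetric group S₈ with 40320 elements.) -/
theorem stmt_6 :
    Subgroup.closure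
      ({c[(0 : Fin 8), 1, 2, 3, 4, 5], Equiv.swap (0 : Fin 8) 6, Equiv.swap (3 : Fin 8) 7} :
        Set (Equiv.Perm (Fin 8))) = ⊤ ∧
    Fintype.card (Equiv.Perm (Fin 8)) = 40320 := by
  constructor
  · set H := Subgroup.closure
      ({c[(0 : Fin 8), 1, 2, 3, 4, 5], Equiv.swap (0 : Fin 8) 6, Equiv.swap (3 : Fin 8) 7} :
        Set (Equiv.Perm (Fin 8))) with hH
    have hc : (c[(0 : Fin 8), 1, 2, 3, 4, 5] : Equiv.Perm (Fin 8)) ∈ H :=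
      Subgroup.subset_closure (by simp)
    have hs : Equiv.swap (0 : Fin 8) 6 ∈ H := Subgroup.subset_closure (by simp)
    have ht : Equiv.swap (3 : Fin 8) 7 ∈ H := Subgroup.subset_closure (by simp)
    have conj : ∀ g : Equiv.Perm (Fin 8), g ∈ H →
        c[(0 : Fin 8), 1, 2, 3, 4, 5] * g * (c[(0 : Fin 8), 1, 2, 3, 4, 5])⁻¹ ∈ H :=
      fun g hg => H.mul_mem (H.mul_mem hc hg) (H.inv_mem hc)
    have h1 : Equiv.swap (1 : Fin 8) 6 ∈ H := by
      have := conj _ hs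
      rwa [show c[(0 : Fin 8), 1, 2, 3, 4, 5] * Equiv.swap (0 : Fin 8) 6 *
        (c[(0 : Fin 8), 1, 2, 3, 4, 5])⁻¹ = Equiv.swap (1 : Fin 8) 6 from by decide] at this
    have h2 : Equiv.swap (2 : Fin 8) 6 ∈ H := by
      have := conj _ h1
      rwa [show c[(0 : Fin 8), 1, 2, 3, 4, 5] * Equiv.swap (1 : Fin 8) 6 *
        (c[(0 : Fin 8), 1, 2, 3, 4, 5])⁻¹ = Equiv.swap (2 : Fin 8) 6 from by decide] at this
    have h3 : Equiv.swap (3 : Fin 8) 6 ∈ H := by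
      have := conj _ h2
      rwa [show c[(0 : Fin 8), 1, 2, 3, 4, 5] * Equiv.swap (2 : Fin 8) 6 *
        (c[(0 : Fin 8), 1, 2, 3, 4, 5])⁻¹ = Equiv.swap (3 : Fin 8) 6 from by decide] at this
    have h4 : Equiv.swap (4 : Fin 8) 6 ∈ H := by
      have := conj _ h3
      rwa [show c[(0 : Fin 8), 1, 2, 3, 4, 5] * Equiv.swap (3 : Fin 8) 6 *
        (c[(0 : Fin 8), 1, 2, 3, 4, 5])⁻¹ = Equiv.swap (4 : Fin 8) 6 from by decide] at this
    have h5 : Equiv.swap (5 : Fin 8) 6 ∈ H := by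
      have := conj _ h4
      rwa [show c[(0 : Fin 8), 1, 2, 3, 4, 5] * Equiv.swap (4 : Fin 8) 6 *
        (c[(0 : Fin 8), 1, 2, 3, 4, 5])⁻¹ = Equiv.swap (5 : Fin 8) 6 from by decide] at this
    have h7 : Equiv.swap (7 : Fin 8) 6 ∈ H := by
      have := H.mul_mem (H.mul_mem h3 ht) h3
      rwa [show Equiv.swap (3 : Fin 8) 6 * Equiv.swap (3 : Fin 8) 7 * Equiv.swap (3 : Fin 8) 6 =
        Equiv.swap (7 : Fin 8) 6 from by decide] at this
    have key : ∀ i : Fin 8, i ≠ 6 → Equiv.swap i 6 ∈ H := by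
      intro i hi
      fin_cases i
      · exact hs
      · exact h1
      · exact h2
      · exact h3
      · exact h4
      · exact h5
      · exact absurd rfl hi
      · exact h7
    have allswaps : ∀ i j : Fin 8, i ≠ j → Equiv.swap i j ∈ H := by
      intro i j hij
      by_cases hj : j = 6
      · subst hj; exact key i hij
      · by_cases hi : i = 6
        · subst hi; rw [Equiv.swap_comm]; exact key j hj
        · have heq := Equiv.swap_mul_swap_mul_swap (x := j) (y := (6 : Fin 8)) (z := i)
            hj (Ne.symm hij)
          have h6i : Equiv.swap (6 : Fin 8) i ∈ H := by
            rw [Equiv.swap_comm]; exact key i hi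
          rw [← heq]
          exact H.mul_mem (H.mul_mem h6i (key j hj)) h6i
    rw [hH, eq_top_iff, ← Equiv.Perm.closure_isSwap, Subgroup.closure_le]
    rintro σ ⟨x, y, hxy, rfl⟩
    exact allswaps x y hxy
  · simp [Fintype.card_perm]; decide
end

section
/- Isoperimetric bound for the signed area of a closed lattice walk: let s₁, ..., s_n be a list of steps in ℤ × ℤ, each equal to one of (1,0), (−1,0), (0,1), (0,−1), whose total sum is (0,0). For each i let x_i denote the first coordinate of the partial sum s₁ + ... + s_{i−1}. Define the signed area A = Σ_{i : s_i = (0,1)} x_i − Σ_{i : s_i = (0,−1)} x_i. Then 16·|A| ≤ n². (This bounds the score in the 'jeu de la coccinelle': with a closed tour of at most 16 steps, the ladybird can gain at most 16 points, the optimum being a 4×4 square tour.) -/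
/-!
Let `h` be the number of steps `(1, 0)` and `v` the number of steps `(0, 1)`; closedness forces
as many steps `(-1, 0)` and `(0, -1)`, so `n = 2h + 2v`. Between two visits of the walk its first
coordinate changes by a sum over a sublist of the steps, which is at most `h` in absolute value.
Pairing each up-step with a down-step therefore bounds the signed area by `v * h`, and
`16 v h ≤ 4 (h + v) ^ 2 = n ^ 2` is AM-GM.
-/

open Finset

theorem List.card_filter_get_eq_count {α : Type*} [DecidableEq α] [BEq α] [LawfulBEq α]
    (s : List α) (a : α) : #{i : Fin s.length | s.get i = a} = s.count a := by
  rw [card_filter]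
  induction s with
  | nil => simp
  | cons b t ih =>
    refine (Fin.sum_univ_succ (n := t.length) fun i => if (b :: t).get i = a then 1 else 0).trans ?_
    rw [List.count_cons, ← ih, add_comm]
    simp only [List.get_eq_getElem, Fin.val_zero, List.getElem_cons_zero, Fin.val_succ,
      List.getElem_cons_succ, beq_iff_eq]
    congr

theorem Finset.abs_sum_sub_sum_le_card_nsmul {ι α : Type*} [AddCommGroup α] [LinearOrder α]
    [IsOrderedAddMonoid α] {U D : Finset ι} (hcard : #U = #D) (f : ι → α) {c : α}
    (hc : ∀ a ∈ U, ∀ b ∈ D, |f a - f b| ≤ c) :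
    |∑ a ∈ U, f a - ∑ b ∈ D, f b| ≤ #U • c := by
  let e : U ≃ D := equivOfCardEq hcard
  have hpair : ∑ a ∈ U, f a - ∑ b ∈ D, f b = ∑ a : U, (f a - f (e a)) := by
    rw [sum_sub_distrib, ← sum_coe_sort U, ← sum_coe_sort D, e.sum_comp (fun b : D => f b)]
  calc |∑ a ∈ U, f a - ∑ b ∈ D, f b| ≤ ∑ a : U, |f a - f (e a)| :=
        hpair ▸ abs_sum_le_sum_abs _ _
    _ ≤ (univ : Finset U).card • c :=
        sum_le_card_nsmul _ _ _ fun a _ => hc a a.2 (e a) (e a).2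
    _ = #U • c := by rw [card_univ, Fintype.card_coe]

namespace LatticeWalk

def unitSteps : Set (ℤ × ℤ) := {(1, 0), (-1, 0), (0, 1), (0, -1)}

variable {s t : List (ℤ × ℤ)}

theorem sum_eq (ht : ∀ p ∈ t, p ∈ unitSteps) :
    t.sum = ((t.count (1, 0) : ℤ) - t.count (-1, 0), (t.count (0, 1) : ℤ) - t.count (0, -1)) := by
  induction t with
  | nil => rfl
  | cons p t ih =>
    have hp := ht p List.mem_cons_self
    simp only [unitSteps, Set.mem_insert_iff, Set.mem_singleton_iff] at hp
    rw [List.sum_cons, ih fun q hq => ht q (List.mem_cons_of_mem p hq)]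
    rcases hp with rfl | rfl | rfl | rfl <;> ext <;> simp <;> ring

theorem length_eq (ht : ∀ p ∈ t, p ∈ unitSteps) :
    t.length = t.count (1, 0) + t.count (-1, 0) + t.count (0, 1) + t.count (0, -1) := by
  induction t with
  | nil => rfl
  | cons p t ih =>
    have hp := ht p List.mem_cons_self
    simp only [unitSteps, Set.mem_insert_iff, Set.mem_singleton_iff] at hp
    rw [List.length_cons, ih fun q hq => ht q (List.mem_cons_of_mem p hq)]
    rcases hp with rfl | rfl | rfl | rfl <;> simp <;> ring

theorem count_right_eq_count_left (hs : ∀ p ∈ s, p ∈ unitSteps) (hx : s.sum.1 = 0) :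
    s.count (1, 0) = s.count (-1, 0) := by
  rw [sum_eq hs] at hx
  omega

theorem count_up_eq_count_down (hs : ∀ p ∈ s, p ∈ unitSteps) (hy : s.sum.2 = 0) :
    s.count (0, 1) = s.count (0, -1) := by
  rw [sum_eq hs] at hy
  omega

theorem abs_fst_sum_le_of_sublist (hs : ∀ p ∈ s, p ∈ unitSteps) (hx : s.sum.1 = 0)
    (hts : t.Sublist s) : |t.sum.1| ≤ s.count (1, 0) := by
  have hRL := count_right_eq_count_left hs hx
  have hR := hts.count_le (1, 0)
  have hL := hts.count_le (-1, 0)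
  rw [sum_eq fun p hp => hs p (hts.subset hp), abs_le]
  omega

theorem abs_fst_sum_take_sub_le (hs : ∀ p ∈ s, p ∈ unitSteps) (hx : s.sum.1 = 0) (i j : ℕ) :
    |(s.take i).sum.1 - (s.take j).sum.1| ≤ s.count (1, 0) := by
  wlog hji : j ≤ i generalizing i j
  · rw [abs_sub_comm]
    exact this j i (by omega)
  have hsplit : (s.take i).sum = (s.take j).sum + ((s.take i).drop j).sum := by
    rw [← List.sum_take_add_sum_drop (s.take i) j, List.take_take, min_eq_left hji]
  rw [hsplit, Prod.fst_add, add_sub_cancel_left]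
  exact abs_fst_sum_le_of_sublist hs hx ((List.drop_sublist _ _).trans (List.take_sublist _ _))

end LatticeWalk

open LatticeWalk in
theorem stmt_10 (s : List (ℤ × ℤ))
    (hsteps : ∀ p ∈ s, p ∈ ({(1, 0), (-1, 0), (0, 1), (0, -1)} : Set (ℤ × ℤ)))
    (hclosed : s.sum = (0, 0)) :
    16 * |(∑ i : Fin s.length, if s.get i = (0, 1) then ((s.take (i : ℕ)).sum).1 else 0) -
          (∑ i : Fin s.length, if s.get i = (0, -1) then ((s.take (i : ℕ)).sum).1 else 0)| ≤
      (s.length : ℤ) ^ 2 := by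
  have hx : s.sum.1 = 0 := by rw [hclosed]
  have hRL := count_right_eq_count_left hsteps hx
  have hUD := count_up_eq_count_down hsteps (by rw [hclosed])
  rw [← sum_filter, ← sum_filter]
  have harea := abs_sum_sub_sum_le_card_nsmul (U := {i | s.get i = (0, 1)})
    (D := {i | s.get i = (0, -1)})
    (by rw [List.card_filter_get_eq_count, List.card_filter_get_eq_count, hUD])
    (fun i : Fin s.length => (s.take i).sum.1)
    fun a _ b _ => abs_fst_sum_take_sub_le hsteps hx a b
  rw [List.card_filter_get_eq_count, nsmul_eq_mul] at harea
  have hlen : (s.length : ℤ) = 2 * s.count (1, 0) + 2 * s.count (0, 1) := by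
    rw [length_eq hsteps]
    omega
  rw [hlen]
  nlinarith [sq_nonneg ((s.count (1, 0) : ℤ) - s.count (0, 1))]
end

section
/- In the 15-puzzle, any sequence of moves that returns the blank square to its starting cell induces an even permutation of the cells: let p₀, p₁, ..., p_k be a list of cells of the 4×4 grid Fin 4 × Fin 4 such that p₀ = p_k and for each i the cells p_i and p_{i+1} are grid-adjacent. Then the composition swap(p_{k−1}, p_k) ∘ ... ∘ swap(p₁, p₂) ∘ swap(p₀, p₁) is an even permutation of Fin 4 × Fin 4. -/
/-- Two cells of the 4×4 grid are adjacent when they differ by exactly one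
in exactly one coordinate. -/
def GridAdj (u v : Fin 4 × Fin 4) : Prop :=
  (u.1 = v.1 ∧ Nat.dist u.2.val v.2.val = 1) ∨ (u.2 = v.2 ∧ Nat.dist u.1.val v.1.val = 1)

theorem stmt_13 (k : ℕ) (p : ℕ → Fin 4 × Fin 4)
    (hclosed : p 0 = p k)
    (hadj : ∀ i < k, GridAdj (p i) (p (i + 1))) :
    (((List.range k).map (fun i => Equiv.swap (p i) (p (i + 1)))).reverse.prod)
      ∈ alternatingGroup (Fin 4 × Fin 4) := by
  -- parity invariant
  have hpar : ∀ i ≤ k, ((p i).1.val + (p i).2.val + i) % 2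
      = ((p 0).1.val + (p 0).2.val) % 2 := by
    intro i hi
    induction i with
    | zero => simp
    | succ n ih =>
      have h := hadj n (by omega)
      have ihn := ih (by omega)
      rcases h with ⟨h1, h2⟩ | ⟨h1, h2⟩ <;>
        simp only [Nat.dist] at h2 <;>
        [ (have : (p n).1.val = (p (n+1)).1.val := by rw [h1]);
          (have : (p n).2.val = (p (n+1)).2.val := by rw [h1]) ] <;>
        omega
  have hke : k % 2 = 0 := by
    have := hpar k le_rfl
    rw [← hclosed] at this
    omega
  rw [Equiv.Perm.mem_alternatingGroup]
  have hswap : ∀ g ∈ ((List.range k).map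
      (fun i => Equiv.swap (p i) (p (i + 1)))).reverse, g.IsSwap := by
    intro g hg
    rw [List.mem_reverse, List.mem_map] at hg
    obtain ⟨i, hi, rfl⟩ := hg
    rw [List.mem_range] at hi
    refine ⟨p i, p (i+1), ?_, rfl⟩
    have h := hadj i hi
    rcases h with ⟨h1, h2⟩ | ⟨h1, h2⟩ <;>
      simp only [Nat.dist] at h2 <;>
      intro he <;> rw [he] at h2 <;> omega
  have := Equiv.Perm.sign_prod_list_swap hswap
  simp only [List.length_reverse, List.length_map, List.length_range] at this
  rw [this, ← Nat.div_add_mod k 2, hke]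
  simp [pow_mul]
end

section
/- No sequence of 15-puzzle moves returning the blank to its starting cell can exchange exactly two tiles: let p₀, p₁, ..., p_k be cells of Fin 4 × Fin 4 with p₀ = p_k and p_i grid-adjacent to p_{i+1} for each i, and let u, v be two distinct cells. Then the composition swap(p_{k−1}, p_k) ∘ ... ∘ swap(p₀, p₁) is never equal to the single transposition swap(u, v). (This is the paper's claim that in the taquin the 'transpositions', which would permute two of the tiles while leaving all the others in place, are impossible.) -/
lemma gridAdj_parity {a b : Fin 4 × Fin 4} (h : GridAdj a b) :
    (a.1.val + a.2.val) % 2 ≠ (b.1.val + b.2.val) % 2 := by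
  rcases h with ⟨h1, h2⟩ | ⟨h1, h2⟩ <;>
  · rw [h1]
    unfold Nat.dist at h2
    omega

lemma gridAdj_ne {a b : Fin 4 × Fin 4} (h : GridAdj a b) : a ≠ b := by
  intro e; subst e
  rcases h with ⟨_, h2⟩ | ⟨_, h2⟩ <;> simp [Nat.dist_self] at h2

theorem stmt_14 (k : ℕ) (p : ℕ → Fin 4 × Fin 4)
    (hclosed : p 0 = p k)
    (hadj : ∀ i < k, GridAdj (p i) (p (i + 1)))
    (u v : Fin 4 × Fin 4) (huv : u ≠ v) :
    (((List.range k).map (fun i => Equiv.swap (p i) (p (i + 1)))).reverse.prod)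
      ≠ Equiv.swap u v := by
  -- k is even
  have key : ∀ i ≤ k, ((p i).1.val + (p i).2.val) % 2 = ((p 0).1.val + (p 0).2.val + i) % 2 := by
    intro i hi
    induction i with
    | zero => simp
    | succ n ih =>
      have h1 := ih (by omega)
      have h2 := gridAdj_parity (hadj n (by omega))
      omega
  have hk : Even k := by
    have := key k le_rfl
    rw [← hclosed] at this
    rcases Nat.even_or_odd k with h | h
    · exact h
    · exfalso; rw [Nat.odd_iff] at h; omega
  intro heq
  have hsign : Equiv.Perm.sign
      (((List.range k).map (fun i => Equiv.swap (p i) (p (i + 1)))).reverse.prod) = (-1 : ℤˣ) ^ k := by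
    rw [Equiv.Perm.sign_prod_list_swap]
    · simp
    · intro g hg
      simp only [List.mem_reverse, List.mem_map, List.mem_range] at hg
      obtain ⟨i, hi, rfl⟩ := hg
      exact ⟨_, _, gridAdj_ne (hadj i hi), rfl⟩
  rw [heq, Equiv.Perm.sign_swap huv, Even.neg_one_pow hk] at hsign
  exact absurd hsign (by decide)
end
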